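/- arXiv:1007.5224 — 7 statements merged into one kernel-verified Lean document; each statement's English description precedes it below -/
import Mathlib

section
/- Let T and A be bounded linear operators on a complex Hilbert space H. Then the set W₀(A) = {ε ∈ ℝ : there exists a sequence (xₙ) of unit vectors in H such that ‖Txₙ‖ → ‖T‖ and Re⟨Txₙ, Axₙ⟩ → ε} is a closed subset of ℝ. -/
/-!
`W₀(A)` is the slice at `‖T‖` of the closure of the image of the unit sphere under
`x ↦ (‖T x‖, Re ⟪T x, A x⟫)`; in `ℝ × ℝ` closures are described by limits of sequences.
-/

open Filter Topology

theorem isClosed_setOf_exists_seq_tendsto {X Y Z : Type*} [TopologicalSpace Y]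
    [TopologicalSpace Z] [FrechetUrysohnSpace (Y × Z)] (S : Set X) (f : X → Y) (g : X → Z)
    (y : Y) :
    IsClosed {z : Z | ∃ x : ℕ → X, (∀ n, x n ∈ S) ∧
      Tendsto (fun n => f (x n)) atTop (𝓝 y) ∧ Tendsto (fun n => g (x n)) atTop (𝓝 z)} := by
  have slice : {z : Z | ∃ x : ℕ → X, (∀ n, x n ∈ S) ∧
      Tendsto (fun n => f (x n)) atTop (𝓝 y) ∧ Tendsto (fun n => g (x n)) atTop (𝓝 z)} =
      (fun z => (y, z)) ⁻¹' closure ((fun x => (f x, g x)) '' S) := by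
    ext z
    simp only [Set.mem_ofPred_eq, Set.mem_preimage, mem_closure_iff_seq_limit, nhds_prod_eq,
      tendsto_prod_iff']
    constructor
    · rintro ⟨x, hxS, hf, hg⟩
      exact ⟨fun n => (f (x n), g (x n)), fun n => Set.mem_image_of_mem _ (hxS n), hf, hg⟩
    · rintro ⟨p, hpS, hf, hg⟩
      choose x hxS hxp using hpS
      simp only [← hxp] at hf hg
      exact ⟨x, hxS, hf, hg⟩
  rw [slice]
  exact isClosed_closure.preimage (Continuous.prodMk_right y)

theorem W0_isClosed_general {H : Type*} [NormedAddCommGroup H] [InnerProductSpace ℂ H]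
    (T A : H →L[ℂ] H) :
    IsClosed {ε : ℝ | ∃ x : ℕ → H, (∀ n, ‖x n‖ = 1) ∧
      Tendsto (fun n => ‖T (x n)‖) atTop (𝓝 ‖T‖) ∧
      Tendsto (fun n => (inner ℂ (T (x n)) (A (x n)) : ℂ).re) atTop (𝓝 ε)} :=
  isClosed_setOf_exists_seq_tendsto {x : H | ‖x‖ = 1} (fun x => ‖T x‖)
    (fun x => (inner ℂ (T x) (A x)).re) ‖T‖

/-- The set `W₀(A)` is closed. -/
theorem W0_isClosed {H : Type*} [NormedAddCommGroup H] [InnerProductSpace ℂ H]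
    [CompleteSpace H] (T A : H →L[ℂ] H) :
    IsClosed {ε : ℝ | ∃ x : ℕ → H, (∀ n, ‖x n‖ = 1) ∧
      Tendsto (fun n => ‖T (x n)‖) atTop (𝓝 ‖T‖) ∧
      Tendsto (fun n => (inner ℂ (T (x n)) (A (x n)) : ℂ).re) atTop (𝓝 ε)} :=
  W0_isClosed_general T A
end

section
/- Let T and A be bounded linear operators on a complex Hilbert space H. If there exists a sequence (xₙ) of unit vectors in H such that Re⟨Txₙ, Axₙ⟩ → 0 and ‖Txₙ‖ → ‖T‖, then ‖T‖ ≤ ‖T - εA‖ for all real scalars ε. -/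
/-!
Expanding the square, `‖(T - εA)x‖² ≥ ‖Tx‖² - 2ε Re⟨Tx, Ax⟩` for every unit vector `x`; along
the given sequence the right-hand side tends to `‖T‖²`.
-/

open Filter Topology

section RealOrthogonal

variable {𝕜 E F : Type*} [RCLike 𝕜] [NormedAddCommGroup E] [NormedSpace 𝕜 E]
  [NormedAddCommGroup F] [InnerProductSpace 𝕜 F]

theorem norm_sq_sub_two_mul_re_inner_le (u v : F) (ε : ℝ) :
    ‖u‖ ^ 2 - 2 * ε * RCLike.re (inner 𝕜 u v) ≤ ‖u - (ε : 𝕜) • v‖ ^ 2 := by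
  have hre : RCLike.re (inner 𝕜 u ((ε : 𝕜) • v)) = ε * RCLike.re (inner 𝕜 u v) := by
    rw [inner_smul_right, RCLike.re_ofReal_mul]
  rw [norm_sub_sq (𝕜 := 𝕜), hre]
  nlinarith [norm_nonneg ((ε : 𝕜) • v)]

theorem ContinuousLinearMap.norm_apply_sq_sub_two_mul_re_inner_le (T A : E →L[𝕜] F) {x : E}
    (hx : ‖x‖ = 1) (ε : ℝ) :
    ‖T x‖ ^ 2 - 2 * ε * RCLike.re (inner 𝕜 (T x) (A x)) ≤ ‖T - (ε : 𝕜) • A‖ ^ 2 :=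
  calc ‖T x‖ ^ 2 - 2 * ε * RCLike.re (inner 𝕜 (T x) (A x))
      ≤ ‖(T - (ε : 𝕜) • A) x‖ ^ 2 := norm_sq_sub_two_mul_re_inner_le (T x) (A x) ε
    _ ≤ ‖T - (ε : 𝕜) • A‖ ^ 2 := by
      gcongr
      exact (T - (ε : 𝕜) • A).unit_le_opNorm x hx.le

end RealOrthogonal

theorem real_orthogonal_of_seq_general {H : Type*} [NormedAddCommGroup H] [InnerProductSpace ℂ H]
    (T A : H →L[ℂ] H)
    (h : ∃ x : ℕ → H, (∀ n, ‖x n‖ = 1) ∧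
      Tendsto (fun n => (inner ℂ (T (x n)) (A (x n)) : ℂ).re) atTop (𝓝 0) ∧
      Tendsto (fun n => ‖T (x n)‖) atTop (𝓝 ‖T‖)) :
    ∀ ε : ℝ, ‖T‖ ≤ ‖T - (ε : ℂ) • A‖ := by
  intro ε
  obtain ⟨x, hx, hre, hnorm⟩ := h
  have hlim : Tendsto (fun n => ‖T (x n)‖ ^ 2 - 2 * ε * (inner ℂ (T (x n)) (A (x n))).re)
      atTop (𝓝 (‖T‖ ^ 2)) := by
    simpa using (hnorm.pow 2).sub (hre.const_mul (2 * ε))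
  have hsq : ‖T‖ ^ 2 ≤ ‖T - (ε : ℂ) • A‖ ^ 2 :=
    le_of_tendsto' hlim fun n => T.norm_apply_sq_sub_two_mul_re_inner_le A (hx n) ε
  exact le_of_sq_le_sq hsq (norm_nonneg _)

/-- If there is a sequence of unit vectors `xₙ` with `Re⟨Txₙ, Axₙ⟩ → 0` and `‖Txₙ‖ → ‖T‖`,
then `T` is real orthogonal to `A`. -/
theorem real_orthogonal_of_seq {H : Type*} [NormedAddCommGroup H] [InnerProductSpace ℂ H]
    [CompleteSpace H] (T A : H →L[ℂ] H)
    (h : ∃ x : ℕ → H, (∀ n, ‖x n‖ = 1) ∧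
      Tendsto (fun n => (inner ℂ (T (x n)) (A (x n)) : ℂ).re) atTop (𝓝 0) ∧
      Tendsto (fun n => ‖T (x n)‖) atTop (𝓝 ‖T‖)) :
    ∀ ε : ℝ, ‖T‖ ≤ ‖T - (ε : ℂ) • A‖ :=
  real_orthogonal_of_seq_general T A h
end

section
/- Let T and A be bounded linear operators on a nontrivial complex Hilbert space H. If ‖T‖ ≤ ‖T - εA‖ for all real scalars ε, then there exists a sequence (xₙ) of unit vectors in H such that Re⟨Txₙ, Axₙ⟩ → 0 and ‖Txₙ‖ → ‖T‖. -/
/-!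
The argument is carried out in the underlying real inner product space. The defect
`q(x) = ‖T‖²‖x‖² - ‖Tx‖²` is a nonnegative quadratic form, hence convex. A unit vector that
almost attains `‖T - εA‖ ≥ ‖T‖` for small `ε > 0` has `⟪Tx, Ax⟫ ≲ ε` and `q(x) ≲ ε`; using `-ε`
instead gives one with `⟪Tx, Ax⟫ ≳ -ε`. If neither of them already has `|⟪Tx, Ax⟫|` small, the
signs differ and the intermediate value theorem on the segment from `x` to `±y` produces a zero of
`⟪Tz, Az⟫`. The sign of `y` is chosen (parallelogram law) so that the segment keeps `‖z‖² ≥ 1/2`,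
so normalising costs at most a factor `2` in `q`, which convexity keeps small along the segment.
-/

open Filter Topology Set
open scoped RealInnerProductSpace

theorem ContinuousLinearMap.exists_norm_eq_one_lt_norm_apply_sq {E G : Type*}
    [NormedAddCommGroup E] [NormedSpace ℝ E] [Nontrivial E] [SeminormedAddCommGroup G]
    [NormedSpace ℝ G] (S : E →L[ℝ] G) {c : ℝ} (hc : c < ‖S‖ ^ 2) :
    ∃ x, ‖x‖ = 1 ∧ c < ‖S x‖ ^ 2 := by
  rcases lt_or_ge c 0 with hc0 | hc0
  · obtain ⟨x, hx⟩ := exists_norm_eq E zero_le_one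
    exact ⟨x, hx, hc0.trans_le (by positivity)⟩
  · have hlt : √c < ‖S‖ := by
      simpa [Real.sqrt_sq (norm_nonneg S)] using Real.sqrt_lt_sqrt hc0 hc
    obtain ⟨x, hx, hSx⟩ :=
      S.exists_nnnorm_eq_one_lt_apply_of_lt_opNNNorm (r := ⟨√c, Real.sqrt_nonneg c⟩) hlt
    exact ⟨x, congrArg NNReal.toReal hx, Real.lt_sq_of_sqrt_lt hSx⟩

section RealInnerProductSpace

variable {F : Type*} [NormedAddCommGroup F] [InnerProductSpace ℝ F]

theorem norm_smul_add_smul_sq {a b : ℝ} (hab : a + b = 1) (x y : F) :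
    ‖a • x + b • y‖ ^ 2 = a * ‖x‖ ^ 2 + b * ‖y‖ ^ 2 - a * b * ‖x - y‖ ^ 2 := by
  rw [norm_add_sq_real, norm_sub_sq_real, norm_smul, norm_smul, real_inner_smul_left,
    real_inner_smul_right, mul_pow, mul_pow, Real.norm_eq_abs, Real.norm_eq_abs, sq_abs, sq_abs]
  obtain rfl : a = 1 - b := by linarith
  ring

namespace ContinuousLinearMap

theorem norm_sub_smul_apply_sq (T A : F →L[ℝ] F) (ε : ℝ) (x : F) :
    ‖(T - ε • A) x‖ ^ 2 = ‖T x‖ ^ 2 - 2 * ε * ⟪T x, A x⟫ + ε ^ 2 * ‖A x‖ ^ 2 := by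
  rw [sub_apply, smul_apply, norm_sub_sq_real, real_inner_smul_right, norm_smul, mul_pow,
    Real.norm_eq_abs, sq_abs]
  ring

noncomputable def normDefect (T : F →L[ℝ] F) (x : F) : ℝ := ‖T‖ ^ 2 * ‖x‖ ^ 2 - ‖T x‖ ^ 2

variable (T A : F →L[ℝ] F)

theorem normDefect_nonneg (x : F) : 0 ≤ T.normDefect x :=
  sub_nonneg.2 <| by
    rw [← mul_pow]
    exact pow_le_pow_left₀ (norm_nonneg _) (T.le_opNorm x) 2

theorem normDefect_of_norm_eq_one {x : F} (hx : ‖x‖ = 1) :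
    T.normDefect x = ‖T‖ ^ 2 - ‖T x‖ ^ 2 := by
  simp [normDefect, hx]

theorem normDefect_smul (c : ℝ) (x : F) : T.normDefect (c • x) = c ^ 2 * T.normDefect x := by
  simp only [normDefect, map_smul, norm_smul, mul_pow, Real.norm_eq_abs, sq_abs]
  ring

theorem normDefect_neg (x : F) : T.normDefect (-x) = T.normDefect x := by
  simpa using T.normDefect_smul (-1) x

theorem convexOn_normDefect : ConvexOn ℝ univ T.normDefect := by
  refine ⟨convex_univ, fun x _ y _ a b ha hb hab => ?_⟩
  have hxy := T.normDefect_nonneg (x - y)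
  simp only [normDefect, smul_eq_mul, map_add, map_smul, map_sub] at hxy ⊢
  rw [norm_smul_add_smul_sq hab, norm_smul_add_smul_sq hab]
  nlinarith [mul_nonneg ha hb]

theorem exists_norm_eq_one_inner_le_of_norm_le_norm_sub_smul [Nontrivial F]
    (h : ∀ ε : ℝ, ‖T‖ ≤ ‖T - ε • A‖) {η : ℝ} (hη : 0 < η) :
    ∃ x, ‖x‖ = 1 ∧ ⟪T x, A x⟫ ≤ η ∧ T.normDefect x ≤ η := by
  set M := ‖T‖
  set a := ‖A‖
  have hC : 0 < 1 + a ^ 2 + 2 * M * a := by positivity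
  set ε := min 1 (η / (1 + a ^ 2 + 2 * M * a))
  have hε : 0 < ε := lt_min one_pos (div_pos hη hC)
  have hε1 : ε ≤ 1 := min_le_left _ _
  have hεη : ε * (1 + a ^ 2 + 2 * M * a) ≤ η := (le_div_iff₀ hC).1 (min_le_right _ _)
  obtain ⟨x, hx, hSx⟩ := (T - ε • A).exists_norm_eq_one_lt_norm_apply_sq (c := M ^ 2 - ε ^ 2)
    (by nlinarith [h ε, norm_nonneg T])
  rw [norm_sub_smul_apply_sq] at hSx
  have hTx : ‖T x‖ ^ 2 ≤ M ^ 2 := by gcongr; exact T.unit_le_opNorm x hx.le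
  have hAx : ‖A x‖ ^ 2 ≤ a ^ 2 := by gcongr; exact A.unit_le_opNorm x hx.le
  have hinner : -(M * a) ≤ ⟪T x, A x⟫ := by
    refine neg_le_of_abs_le ((abs_real_inner_le_norm _ _).trans ?_)
    gcongr <;> [exact T.unit_le_opNorm x hx.le; exact A.unit_le_opNorm x hx.le]
  have hε2 : ε ^ 2 ≤ ε := by nlinarith
  have hgap : 2 * ε * ⟪T x, A x⟫ + (M ^ 2 - ‖T x‖ ^ 2) < ε ^ 2 * (1 + a ^ 2) := by
    nlinarith [mul_le_mul_of_nonneg_left hAx (sq_nonneg ε)]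
  refine ⟨x, hx, ?_, ?_⟩
  · have h2ε : 2 * ε * ⟪T x, A x⟫ < 2 * ε * (ε * (1 + a ^ 2 + 2 * M * a)) := by
      nlinarith [mul_nonneg hε.le (mul_nonneg (norm_nonneg T) (norm_nonneg A))]
    linarith [lt_of_mul_lt_mul_left h2ε (by positivity)]
  · rw [normDefect_of_norm_eq_one T hx]
    nlinarith [mul_le_mul_of_nonneg_left hinner hε.le]

theorem exists_norm_eq_one_inner_apply_eq_zero_of_norm_sub_sq_le {x y : F} {η : ℝ}
    (hx : ‖x‖ = 1) (hy : ‖y‖ = 1) (hxy : ‖x - y‖ ^ 2 ≤ 2)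
    (hTx : T.normDefect x ≤ η) (hTy : T.normDefect y ≤ η)
    (hAx : 0 ≤ ⟪T x, A x⟫) (hAy : ⟪T y, A y⟫ ≤ 0) :
    ∃ z, ‖z‖ = 1 ∧ ⟪T z, A z⟫ = 0 ∧ T.normDefect z ≤ 2 * η := by
  set w : ℝ → F := fun t => (1 - t) • x + t • y
  obtain ⟨t, ⟨ht0, ht1⟩, hwt⟩ : ∃ t ∈ Icc (0 : ℝ) 1, ⟪T (w t), A (w t)⟫ = 0 :=
    intermediate_value_Icc' zero_le_one
      (by fun_prop : Continuous fun t => ⟪T (w t), A (w t)⟫).continuousOn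
      ⟨by simpa [w] using hAy, by simpa [w] using hAx⟩
  have hw : 1 / 2 ≤ ‖w t‖ ^ 2 := by
    rw [norm_smul_add_smul_sq (by ring), hx, hy]
    nlinarith [mul_le_mul_of_nonneg_left hxy (mul_nonneg (sub_nonneg.2 ht1) ht0),
      sq_nonneg (2 * t - 1)]
  have hTw : T.normDefect (w t) ≤ η := by
    refine ((T.convexOn_normDefect).2 trivial trivial (sub_nonneg.2 ht1) ht0 (by ring)).trans ?_
    simp only [smul_eq_mul]
    nlinarith
  have hw0 : w t ≠ 0 := fun h0 => by norm_num [h0] at hw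
  refine ⟨‖w t‖⁻¹ • w t, norm_smul_inv_norm hw0, ?_, ?_⟩
  · simp [real_inner_smul_left, real_inner_smul_right, hwt]
  · rw [normDefect_smul, inv_pow, inv_mul_le_iff₀ (by positivity)]
    nlinarith [T.normDefect_nonneg (w t)]

theorem exists_norm_eq_one_inner_apply_eq_zero {x y : F} {η : ℝ}
    (hx : ‖x‖ = 1) (hy : ‖y‖ = 1) (hTx : T.normDefect x ≤ η) (hTy : T.normDefect y ≤ η)
    (hAx : 0 ≤ ⟪T x, A x⟫) (hAy : ⟪T y, A y⟫ ≤ 0) :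
    ∃ z, ‖z‖ = 1 ∧ ⟪T z, A z⟫ = 0 ∧ T.normDefect z ≤ 2 * η := by
  rcases le_or_gt (‖x - y‖ ^ 2) 2 with hxy | hxy
  · exact T.exists_norm_eq_one_inner_apply_eq_zero_of_norm_sub_sq_le A hx hy hxy hTx hTy hAx hAy
  have hxy' : ‖x - -y‖ ^ 2 ≤ 2 := by
    have := parallelogram_law_with_norm ℝ x y
    rw [sub_neg_eq_add]
    nlinarith
  refine T.exists_norm_eq_one_inner_apply_eq_zero_of_norm_sub_sq_le A hx (by simpa) hxy' hTx
    (by rwa [normDefect_neg]) hAx (by simpa using hAy)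

theorem exists_norm_eq_one_abs_inner_apply_le [Nontrivial F]
    (h : ∀ ε : ℝ, ‖T‖ ≤ ‖T - ε • A‖) {η : ℝ} (hη : 0 < η) :
    ∃ z, ‖z‖ = 1 ∧ |⟪T z, A z⟫| ≤ η ∧ T.normDefect z ≤ 2 * η := by
  obtain ⟨x, hx, hAx, hTx⟩ := T.exists_norm_eq_one_inner_le_of_norm_le_norm_sub_smul (-A)
    (fun ε => by simpa using h (-ε)) hη
  obtain ⟨y, hy, hAy, hTy⟩ := T.exists_norm_eq_one_inner_le_of_norm_le_norm_sub_smul A h hη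
  rw [neg_apply, inner_neg_right, neg_le] at hAx
  by_cases hx' : ⟪T x, A x⟫ ≤ η
  · exact ⟨x, hx, abs_le.2 ⟨hAx, hx'⟩, by linarith⟩
  by_cases hy' : -η ≤ ⟪T y, A y⟫
  · exact ⟨y, hy, abs_le.2 ⟨hy', hAy⟩, by linarith⟩
  obtain ⟨z, hz, hAz, hTz⟩ :=
    T.exists_norm_eq_one_inner_apply_eq_zero A hx hy hTx hTy (by linarith) (by linarith)
  exact ⟨z, hz, by simp [hAz, hη.le], hTz⟩

theorem tendsto_norm_apply_of_tendsto_normDefect {ι : Type*} {l : Filter ι} {x : ι → F}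
    (hx : ∀ i, ‖x i‖ = 1) (h : Tendsto (fun i => T.normDefect (x i)) l (𝓝 0)) :
    Tendsto (fun i => ‖T (x i)‖) l (𝓝 ‖T‖) := by
  have hsqrt : ∀ i, ‖T (x i)‖ = √(‖T‖ ^ 2 - T.normDefect (x i)) := fun i => by
    rw [normDefect_of_norm_eq_one T (hx i), sub_sub_cancel, Real.sqrt_sq (norm_nonneg _)]
  have hlim := ((tendsto_const_nhds (x := ‖T‖ ^ 2)).sub h).sqrt
  rwa [sub_zero, Real.sqrt_sq (norm_nonneg T), ← funext hsqrt] at hlim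

end ContinuousLinearMap

end RealInnerProductSpace

theorem seq_of_real_orthogonal_general {H : Type*} [NormedAddCommGroup H] [InnerProductSpace ℂ H]
    [Nontrivial H] (T A : H →L[ℂ] H)
    (h : ∀ ε : ℝ, ‖T‖ ≤ ‖T - (ε : ℂ) • A‖) :
    ∃ x : ℕ → H, (∀ n, ‖x n‖ = 1) ∧
      Tendsto (fun n => (inner ℂ (T (x n)) (A (x n)) : ℂ).re) atTop (𝓝 0) ∧
      Tendsto (fun n => ‖T (x n)‖) atTop (𝓝 ‖T‖) := by
  let _ := InnerProductSpace.complexToReal (G := H)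
  set T' := T.restrictScalars ℝ
  set A' := A.restrictScalars ℝ
  have h' : ∀ ε : ℝ, ‖T'‖ ≤ ‖T' - ε • A'‖ := fun ε => by
    simpa [T', A', ← ContinuousLinearMap.restrictScalars_smul,
      ← ContinuousLinearMap.restrictScalars_sub] using h ε
  choose x hx hinner hdefect using fun n : ℕ =>
    T'.exists_norm_eq_one_abs_inner_apply_le A' h' (Nat.one_div_pos_of_nat (n := n))
  have hlim := tendsto_one_div_add_atTop_nhds_zero_nat (𝕜 := ℝ)
  refine ⟨x, hx, squeeze_zero_norm hinner hlim, T'.tendsto_norm_apply_of_tendsto_normDefect hx ?_⟩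
  exact squeeze_zero (fun n => T'.normDefect_nonneg (x n)) hdefect (by simpa using hlim.const_mul 2)

/-- If `T` is real orthogonal to `A`, then there is a sequence of unit vectors `xₙ` with
`Re⟨Txₙ, Axₙ⟩ → 0` and `‖Txₙ‖ → ‖T‖`. -/
theorem seq_of_real_orthogonal {H : Type*} [NormedAddCommGroup H] [InnerProductSpace ℂ H]
    [CompleteSpace H] [Nontrivial H] (T A : H →L[ℂ] H)
    (h : ∀ ε : ℝ, ‖T‖ ≤ ‖T - (ε : ℂ) • A‖) :
    ∃ x : ℕ → H, (∀ n, ‖x n‖ = 1) ∧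
      Tendsto (fun n => (inner ℂ (T (x n)) (A (x n)) : ℂ).re) atTop (𝓝 0) ∧
      Tendsto (fun n => ‖T (x n)‖) atTop (𝓝 ‖T‖) :=
  seq_of_real_orthogonal_general T A h
end

section
/- Let T and A be bounded linear operators on a nontrivial complex Hilbert space H, and suppose A is bounded below, i.e. there exists c > 0 such that ‖Ax‖ ≥ c‖x‖ for all x ∈ H (equivalently, 0 does not belong to the approximate point spectrum of A). If ε₀ is a real scalar such that ‖T‖ = ‖T - ε₀A‖ ≤ ‖T - εA‖ for all ε ∈ ℝ, then ε₀ = 0. -/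
/-!
Put `μ = ε₀ / 2` and `S = T - μA`, so that `T = S + μA` and `T - ε₀A = S - μA`. By the
parallelogram law, `‖Sx‖² + |μ|²‖Ax‖²` is the mean of `‖Tx‖²` and `‖(T - ε₀A)x‖²`, hence at most
`‖T‖²‖x‖²`; as `A` is bounded below this gives `‖S‖² + μ²c² ≤ ‖T‖²`. Minimality of `‖T - ε₀A‖`
gives `‖T‖ ≤ ‖S‖`, so `μ = 0`.
-/

theorem norm_sq_add_norm_sq_le_of_norm_add_le_of_norm_sub_le (𝕜 : Type*) {F : Type*} [RCLike 𝕜]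
    [NormedAddCommGroup F] [InnerProductSpace 𝕜 F] {u w : F} {r : ℝ}
    (hadd : ‖u + w‖ ≤ r) (hsub : ‖u - w‖ ≤ r) : ‖u‖ ^ 2 + ‖w‖ ^ 2 ≤ r ^ 2 := by
  have hpar := parallelogram_law_with_norm 𝕜 u w
  nlinarith [mul_self_le_mul_self (norm_nonneg _) hadd, mul_self_le_mul_self (norm_nonneg _) hsub]

theorem ContinuousLinearMap.opNorm_sq_le_of_forall_sq_le {𝕜 E F : Type*}
    [NontriviallyNormedField 𝕜] [NormedAddCommGroup E] [NormedSpace 𝕜 E] [Nontrivial E]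
    [NormedAddCommGroup F] [NormedSpace 𝕜 F] (f : E →L[𝕜] F) {K : ℝ}
    (h : ∀ x, ‖f x‖ ^ 2 ≤ K * ‖x‖ ^ 2) : ‖f‖ ^ 2 ≤ K := by
  obtain ⟨x₀, hx₀⟩ := exists_ne (0 : E)
  have hK : 0 ≤ K :=
    nonneg_of_mul_nonneg_left ((sq_nonneg _).trans (h x₀)) (pow_pos (norm_pos_iff.mpr hx₀) 2)
  have hf : ‖f‖ ≤ √K := f.opNorm_le_bound (Real.sqrt_nonneg K) fun x => by
    rw [← Real.sqrt_sq (norm_nonneg x), ← Real.sqrt_mul hK, Real.le_sqrt (norm_nonneg _)]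
    · exact h x
    · positivity
  calc ‖f‖ ^ 2 ≤ √K ^ 2 := pow_le_pow_left₀ (norm_nonneg f) hf 2
    _ = K := Real.sq_sqrt hK

theorem ContinuousLinearMap.opNorm_sq_add_sq_le {𝕜 E F : Type*} [RCLike 𝕜] [NormedAddCommGroup E]
    [NormedSpace 𝕜 E] [Nontrivial E] [NormedAddCommGroup F] [InnerProductSpace 𝕜 F] (S W : E →L[𝕜] F) {M c : ℝ}
    (hc : 0 ≤ c) (hW : ∀ x, c * ‖x‖ ≤ ‖W x‖) (hadd : ‖S + W‖ ≤ M) (hsub : ‖S - W‖ ≤ M) :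
    ‖S‖ ^ 2 + c ^ 2 ≤ M ^ 2 := by
  suffices ∀ x, ‖S x‖ ^ 2 ≤ (M ^ 2 - c ^ 2) * ‖x‖ ^ 2 by
    linarith [S.opNorm_sq_le_of_forall_sq_le this]
  intro x
  have hpoint : ‖S x‖ ^ 2 + ‖W x‖ ^ 2 ≤ (M * ‖x‖) ^ 2 :=
    norm_sq_add_norm_sq_le_of_norm_add_le_of_norm_sub_le 𝕜
      (((S + W).le_opNorm x).trans (mul_le_mul_of_nonneg_right hadd (norm_nonneg x)))
      (((S - W).le_opNorm x).trans (mul_le_mul_of_nonneg_right hsub (norm_nonneg x)))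
  have hWx := pow_le_pow_left₀ (by positivity) (hW x) 2
  linarith [mul_pow M ‖x‖ 2, mul_pow c ‖x‖ 2]

theorem real_center_of_mass_unique_general {H : Type*} [NormedAddCommGroup H] [InnerProductSpace ℂ H]
    [Nontrivial H] (T A : H →L[ℂ] H)
    (c : ℝ) (hc : 0 < c) (hA : ∀ x : H, c * ‖x‖ ≤ ‖A x‖) (ε₀ : ℝ)
    (h₁ : ‖T‖ = ‖T - (ε₀ : ℂ) • A‖)
    (h₂ : ∀ ε : ℝ, ‖T - (ε₀ : ℂ) • A‖ ≤ ‖T - (ε : ℂ) • A‖) :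
    ε₀ = 0 := by
  set μ : ℝ := ε₀ / 2
  have hW : ∀ x, |μ| * c * ‖x‖ ≤ ‖((μ : ℂ) • A) x‖ := fun x => by
    rw [smul_apply, norm_smul, Complex.norm_real, Real.norm_eq_abs, mul_assoc]
    exact mul_le_mul_of_nonneg_left (hA x) (abs_nonneg μ)
  have hsub : T - (μ : ℂ) • A - (μ : ℂ) • A = T - (ε₀ : ℂ) • A := by
    rw [sub_sub, ← add_smul, ← Complex.ofReal_add, add_halves]
  have hbound := (T - (μ : ℂ) • A).opNorm_sq_add_sq_le _ (by positivity) hW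
    (by rw [sub_add_cancel]) (hsub ▸ h₁.ge)
  have hmin : ‖T‖ ≤ ‖T - (μ : ℂ) • A‖ := h₁.le.trans (h₂ μ)
  have hμc : |μ| * c = 0 := pow_eq_zero_iff two_ne_zero |>.mp <| by
    nlinarith [pow_le_pow_left₀ (norm_nonneg T) hmin 2, sq_nonneg (|μ| * c)]
  simpa [μ, hc.ne'] using hμc

/-- If `A` is bounded below and `ε₀` is a real center of mass of `T` relative to `A` with
`‖T‖ = ‖T - ε₀A‖`, then `ε₀ = 0`. -/
theorem real_center_of_mass_unique {H : Type*} [NormedAddCommGroup H] [InnerProductSpace ℂ H]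
    [CompleteSpace H] [Nontrivial H] (T A : H →L[ℂ] H)
    (c : ℝ) (hc : 0 < c) (hA : ∀ x : H, c * ‖x‖ ≤ ‖A x‖) (ε₀ : ℝ)
    (h₁ : ‖T‖ = ‖T - (ε₀ : ℂ) • A‖)
    (h₂ : ∀ ε : ℝ, ‖T - (ε₀ : ℂ) • A‖ ≤ ‖T - (ε : ℂ) • A‖) :
    ε₀ = 0 :=
  real_center_of_mass_unique_general T A c hc hA ε₀ h₁ h₂
end

section
/- Let T and A be the bounded linear operators on the real Hilbert space ℝ² defined by T(x, y) = (x, 0) and A(x, y) = (0, y). Then ‖T‖ = ‖T - A‖ = ‖T + A‖, and ‖T‖ ≤ ‖T - εA‖ for every real scalar ε; in particular the real center of mass of T relative to A is not unique. -/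
/-!
In the standard basis `T - εA` is the diagonal matrix `diag(1, -ε)`, whose operator norm is
`max 1 |ε|`. So `‖T - εA‖ ≥ 1 = ‖T‖`, with equality exactly for `|ε| ≤ 1`: every such `ε`, in
particular `0` and `1`, is a real center of mass.
-/

open Matrix
open scoped Matrix.Norms.L2Operator

theorem norm_vecCons_two {E : Type*} [SeminormedAddCommGroup E] (a b : E) :
    ‖![a, b]‖ = max ‖a‖ ‖b‖ := by
  simp [Pi.norm_def, Fin.univ_succ, NNReal.coe_max]

theorem eq_toEuclideanCLM_diagonal {𝕜 n : Type*} [RCLike 𝕜] [Fintype n] [DecidableEq n]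
    {d : n → 𝕜} {T : EuclideanSpace 𝕜 n →L[𝕜] EuclideanSpace 𝕜 n}
    (hT : ∀ v, (T v).ofLp = fun i ↦ d i * v i) :
    T = toEuclideanCLM (n := n) (𝕜 := 𝕜) (diagonal d) := by
  ext1 v
  ext i
  simp [hT, mulVec_diagonal]

theorem norm_sub_smul_eq_max (T A : EuclideanSpace ℝ (Fin 2) →L[ℝ] EuclideanSpace ℝ (Fin 2))
    (hT : ∀ v : EuclideanSpace ℝ (Fin 2), T v = ![v 0, 0])
    (hA : ∀ v : EuclideanSpace ℝ (Fin 2), A v = ![0, v 1]) (c : ℝ) :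
    ‖T - c • A‖ = max 1 |c| := by
  have hdiag : T - c • A = toEuclideanCLM (n := Fin 2) (𝕜 := ℝ) (diagonal ![1, -c]) :=
    eq_toEuclideanCLM_diagonal fun v ↦ by ext i; fin_cases i <;> simp [hT, hA]
  rw [hdiag, l2_opNorm_toEuclideanCLM, l2_opNorm_diagonal, norm_vecCons_two]
  simp

/-- For `T(x,y) = (x,0)` and `A(x,y) = (0,y)` on `ℝ²`, we have
`‖T‖ = ‖T - A‖ = ‖T + A‖` and `‖T‖ ≤ ‖T - εA‖` for all real `ε`; in particular the real
center of mass of `T` relative to `A` is not unique. -/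
theorem real_center_of_mass_not_unique
    (T A : EuclideanSpace ℝ (Fin 2) →L[ℝ] EuclideanSpace ℝ (Fin 2))
    (hT : ∀ v : EuclideanSpace ℝ (Fin 2), T v = ![v 0, 0])
    (hA : ∀ v : EuclideanSpace ℝ (Fin 2), A v = ![0, v 1]) :
    ‖T‖ = ‖T - A‖ ∧ ‖T‖ = ‖T + A‖ ∧ (∀ ε : ℝ, ‖T‖ ≤ ‖T - ε • A‖) ∧
      ¬ ∃! ε₀ : ℝ, ∀ ε : ℝ, ‖T - ε₀ • A‖ ≤ ‖T - ε • A‖ := by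
  have key := norm_sub_smul_eq_max T A hT hA
  have hT₁ : ‖T‖ = 1 := by simpa [zero_smul ℝ A] using key 0
  have hTA : ‖T - A‖ = 1 := by simpa using key 1
  have hTpA : ‖T + A‖ = 1 := by simpa [neg_smul (1 : ℝ) A, one_smul ℝ A] using key (-1)
  have center {ε₀ : ℝ} (h : |ε₀| ≤ 1) (ε : ℝ) : ‖T - ε₀ • A‖ ≤ ‖T - ε • A‖ := by
    rw [key, key, max_eq_left h]
    exact le_max_left _ _
  refine ⟨hT₁.trans hTA.symm, hT₁.trans hTpA.symm, fun ε ↦ ?_, fun h ↦ ?_⟩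
  · rw [hT₁, key]
    exact le_max_left _ _
  · exact zero_ne_one (h.unique (center (by simp)) (center (by simp)))
end

section
/- Let T be the bounded linear operator on ℂ² given by the diagonal matrix diag(1, 1 + i). Then cos T, the infimum of Re⟨Tz, z⟩/(‖Tz‖·‖z‖) over all nonzero z ∈ ℂ², equals 1/√2. -/
/-!
Since `Re (1 + i) = 1`, we have `Re⟨Tz, z⟩ = ‖z‖²`, so the quotient defining `cos T` is
`‖z‖ / ‖Tz‖`. Its infimum is `1 / ‖T‖ = 1 / |1 + i| = 1 / √2`, attained at `z = e₂`.
-/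

open RCLike

section

variable {𝕜 E : Type*} [RCLike 𝕜] [NormedAddCommGroup E] [InnerProductSpace 𝕜 E]

/-- Vectors with `T z = 0` contribute the junk value `0` to the set. -/
noncomputable def operatorCos (T : E →L[𝕜] E) : ℝ :=
  sInf {r : ℝ | ∃ z : E, z ≠ 0 ∧ r = re (inner 𝕜 (T z) z) / (‖T z‖ * ‖z‖)}

theorem re_inner_div_eq_norm_div_norm {T : E →L[𝕜] E} {z : E} (hz : z ≠ 0)
    (hre : re (inner 𝕜 (T z) z) = ‖z‖ ^ 2) :
    re (inner 𝕜 (T z) z) / (‖T z‖ * ‖z‖) = ‖z‖ / ‖T z‖ := by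
  rw [hre, sq, mul_div_mul_right _ _ (norm_ne_zero_iff.mpr hz)]

theorem operatorCos_eq_inv_of_re_inner_self {T : E →L[𝕜] E} {c : ℝ}
    (hre : ∀ z, re (inner 𝕜 (T z) z) = ‖z‖ ^ 2) (hle : ∀ z, ‖T z‖ ≤ c * ‖z‖)
    {z₀ : E} (hz₀ : z₀ ≠ 0) (hattain : ‖T z₀‖ = c * ‖z₀‖) :
    operatorCos T = c⁻¹ := by
  have hTz : ∀ z, z ≠ 0 → 0 < ‖T z‖ := by
    intro z hz
    refine norm_pos_iff.mpr fun h => hz ?_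
    simpa [h] using (hre z).symm
  have hc : 0 < c :=
    pos_of_mul_pos_left (hattain ▸ hTz z₀ hz₀) (norm_nonneg z₀)
  refine IsLeast.csInf_eq ⟨⟨z₀, hz₀, ?_⟩, ?_⟩
  · rw [re_inner_div_eq_norm_div_norm hz₀ (hre z₀), hattain,
      div_mul_cancel_right₀ (norm_ne_zero_iff.mpr hz₀)]
  · rintro r ⟨z, hz, rfl⟩
    rw [re_inner_div_eq_norm_div_norm hz (hre z), le_div_iff₀ (hTz z hz),
      inv_mul_le_iff₀ hc]
    exact hle z

end

section

variable {T : EuclideanSpace ℂ (Fin 2) →L[ℂ] EuclideanSpace ℂ (Fin 2)} {μ : ℂ}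

theorem re_inner_diag_apply_self
    (hT : ∀ z : EuclideanSpace ℂ (Fin 2), T z = ![z 0, μ * z 1])
    (hμ : μ.re = 1) (z : EuclideanSpace ℂ (Fin 2)) :
    re (inner ℂ (T z) z) = ‖z‖ ^ 2 := by
  simp only [EuclideanSpace.norm_sq_eq, PiLp.inner_apply, Fin.sum_univ_two, hT z,
    Matrix.cons_val_zero, Matrix.cons_val_one, Matrix.cons_val_fin_one, RCLike.inner_apply,
    map_mul, mul_left_comm (z 1), RCLike.mul_conj]
  simp [← Complex.ofReal_pow, hμ]

theorem norm_sq_diag_apply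
    (hT : ∀ z : EuclideanSpace ℂ (Fin 2), T z = ![z 0, μ * z 1])
    (z : EuclideanSpace ℂ (Fin 2)) :
    ‖T z‖ ^ 2 = ‖z 0‖ ^ 2 + ‖μ‖ ^ 2 * ‖z 1‖ ^ 2 := by
  simp [EuclideanSpace.norm_sq_eq, Fin.sum_univ_two, hT z, mul_pow]

theorem norm_diag_apply_le
    (hT : ∀ z : EuclideanSpace ℂ (Fin 2), T z = ![z 0, μ * z 1])
    (hμ : 1 ≤ ‖μ‖) (z : EuclideanSpace ℂ (Fin 2)) :
    ‖T z‖ ≤ ‖μ‖ * ‖z‖ := by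
  have hsq : ‖T z‖ ^ 2 ≤ (‖μ‖ * ‖z‖) ^ 2 := by
    rw [norm_sq_diag_apply hT, mul_pow, EuclideanSpace.norm_sq_eq, Fin.sum_univ_two]
    nlinarith [sq_nonneg ‖z 0‖, one_le_pow₀ (n := 2) hμ]
  exact (pow_le_pow_iff_left₀ (norm_nonneg _) (by positivity) two_ne_zero).mp hsq

theorem norm_diag_apply_single_one
    (hT : ∀ z : EuclideanSpace ℂ (Fin 2), T z = ![z 0, μ * z 1]) :
    ‖T (EuclideanSpace.single 1 1)‖ =
      ‖μ‖ * ‖EuclideanSpace.single (1 : Fin 2) (1 : ℂ)‖ := by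
  rw [← sq_eq_sq₀ (norm_nonneg _) (by positivity), norm_sq_diag_apply hT]
  simp

theorem operatorCos_diag_one_of_re_eq_one
    (hT : ∀ z : EuclideanSpace ℂ (Fin 2), T z = ![z 0, μ * z 1])
    (hμ : μ.re = 1) : operatorCos T = ‖μ‖⁻¹ :=
  operatorCos_eq_inv_of_re_inner_self (re_inner_diag_apply_self hT hμ)
    (norm_diag_apply_le hT (hμ ▸ Complex.re_le_norm μ))
    (by simp) (norm_diag_apply_single_one hT)

end

/-- For `T = diag(1, 1+i)` on `ℂ²`, the first antieigenvalue
`cos T = inf_{z ≠ 0} Re⟨Tz, z⟩/(‖Tz‖‖z‖)` equals `1/√2`. -/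
theorem cos_diag_one_one_add_I
    (T : EuclideanSpace ℂ (Fin 2) →L[ℂ] EuclideanSpace ℂ (Fin 2))
    (hT : ∀ z : EuclideanSpace ℂ (Fin 2), T z = ![z 0, (1 + Complex.I) * z 1]) :
    sInf {r : ℝ | ∃ z : EuclideanSpace ℂ (Fin 2), z ≠ 0 ∧
        r = (inner ℂ (T z) z : ℂ).re / (‖T z‖ * ‖z‖)} = 1 / Real.sqrt 2 := by
  have hnorm : ‖1 + Complex.I‖ = Real.sqrt 2 := by
    rw [Complex.norm_def, Complex.normSq_apply]; norm_num
  rw [one_div, ← hnorm]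
  exact operatorCos_diag_one_of_re_eq_one hT (by simp)
end

section
/- Let T be the bounded linear operator on ℂ² given by the diagonal matrix diag(1, 1 + i). Then |cos| T, the infimum of |⟨Tz, z⟩|/(‖Tz‖·‖z‖) over all nonzero z ∈ ℂ², equals √(2√2 - 2). -/
/-!
Writing `s = |z₀|²` and `t = |z₁|²`, one has `⟨Tz, z⟩ = s + (1 - i) t`, `‖Tz‖² = s + 2t` and
`‖z‖² = s + t`, so the squared cosine is `((s + t)² + t²) / ((s + 2t)(s + t))`. Its numerator
exceeds `(2√2 - 2)` times its denominator by exactly `((√2 - 1)(s + t) - t)²`, which vanishes at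
`(s, t) = (√2, 1)`.
-/

open Complex ComplexConjugate

section Diagonal

variable {𝕜 ι : Type*} [RCLike 𝕜] [Fintype ι] {d : ι → 𝕜} {x z : EuclideanSpace 𝕜 ι}

lemma EuclideanSpace.inner_eq_sum_of_apply_eq_mul (h : ∀ i, x i = d i * z i) :
    inner 𝕜 x z = ∑ i, conj (d i) * ((‖z i‖ ^ 2 : ℝ) : 𝕜) := by
  refine Finset.sum_congr rfl fun i _ => ?_
  rw [h, RCLike.inner_apply, map_mul, RCLike.ofReal_pow, ← RCLike.mul_conj]
  ring

lemma EuclideanSpace.norm_sq_eq_sum_of_apply_eq_mul (h : ∀ i, x i = d i * z i) :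
    ‖x‖ ^ 2 = ∑ i, ‖d i‖ ^ 2 * ‖z i‖ ^ 2 := by
  simp only [EuclideanSpace.norm_sq_eq, h, norm_mul, mul_pow]

lemma EuclideanSpace.norm_sq_fin_two (z : EuclideanSpace 𝕜 (Fin 2)) :
    ‖z‖ ^ 2 = ‖z 0‖ ^ 2 + ‖z 1‖ ^ 2 := by
  rw [EuclideanSpace.norm_sq_eq, Fin.sum_univ_two]

end Diagonal

namespace DiagOneOneAddI

noncomputable def cosSq (s t : ℝ) : ℝ := ((s + t) ^ 2 + t ^ 2) / ((s + 2 * t) * (s + t))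

lemma two_mul_sqrt_two_sub_two_le_cosSq {s t : ℝ} (hs : 0 ≤ s) (ht : 0 ≤ t) (hst : 0 < s + t) :
    2 * √2 - 2 ≤ cosSq s t := by
  have h2 : √2 ^ 2 = 2 := Real.sq_sqrt zero_le_two
  rw [cosSq, le_div_iff₀ (by nlinarith)]
  nlinarith [sq_nonneg ((√2 - 1) * (s + t) - t)]

lemma cosSq_sqrt_two_one : cosSq √2 1 = 2 * √2 - 2 := by
  have h2 : √2 ^ 2 = 2 := Real.sq_sqrt zero_le_two
  rw [cosSq, div_eq_iff (by positivity)]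
  linear_combination (-2 * √2 - 3) * h2

variable {x z : EuclideanSpace ℂ (Fin 2)}

lemma norm_sq_of_apply_eq_mul (h : ∀ i, x i = ![1, 1 + I] i * z i) :
    ‖x‖ ^ 2 = ‖z 0‖ ^ 2 + 2 * ‖z 1‖ ^ 2 := by
  have h2 : ‖1 + I‖ ^ 2 = 2 := by
    simp only [Complex.sq_norm, normSq_apply, add_re, one_re, I_re, add_im, one_im, I_im]
    norm_num
  simp [EuclideanSpace.norm_sq_eq_sum_of_apply_eq_mul h, h2]

lemma norm_inner_sq_of_apply_eq_mul (h : ∀ i, x i = ![1, 1 + I] i * z i) :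
    ‖inner ℂ x z‖ ^ 2 = (‖z 0‖ ^ 2 + ‖z 1‖ ^ 2) ^ 2 + (‖z 1‖ ^ 2) ^ 2 := by
  rw [EuclideanSpace.inner_eq_sum_of_apply_eq_mul h, Fin.sum_univ_two]
  generalize ‖z 0‖ ^ 2 = s, ‖z 1‖ ^ 2 = t
  have hinner : conj 1 * (s : ℂ) + conj (1 + I) * t = ((s + t : ℝ) : ℂ) + ((-t : ℝ) : ℂ) * I := by
    simp only [map_one, map_add, conj_I]
    push_cast
    ring
  simp only [Matrix.cons_val_zero, Matrix.cons_val_one, Matrix.cons_val_fin_one, coe_algebraMap]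
  rw [hinner, Complex.sq_norm, Complex.normSq_add_mul_I, neg_sq]

lemma norm_inner_div_eq_sqrt_cosSq (h : ∀ i, x i = ![1, 1 + I] i * z i) :
    ‖inner ℂ x z‖ / (‖x‖ * ‖z‖) = √(cosSq (‖z 0‖ ^ 2) (‖z 1‖ ^ 2)) := by
  rw [cosSq, Real.sqrt_div' _ (by positivity), Real.sqrt_mul (by positivity),
    ← norm_inner_sq_of_apply_eq_mul h, ← norm_sq_of_apply_eq_mul h,
    ← EuclideanSpace.norm_sq_fin_two]
  simp only [Real.sqrt_sq, norm_nonneg]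

end DiagOneOneAddI

open DiagOneOneAddI

/-- For `T = diag(1, 1+i)` on `ℂ²`, the total antieigenvalue
`|cos| T = inf_{z ≠ 0} |⟨Tz, z⟩|/(‖Tz‖‖z‖)` equals `√(2√2 - 2)`. -/
theorem total_cos_diag_one_one_add_I
    (T : EuclideanSpace ℂ (Fin 2) →L[ℂ] EuclideanSpace ℂ (Fin 2))
    (hT : ∀ z : EuclideanSpace ℂ (Fin 2), T z = ![z 0, (1 + Complex.I) * z 1]) :
    sInf {r : ℝ | ∃ z : EuclideanSpace ℂ (Fin 2), z ≠ 0 ∧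
        r = ‖(inner ℂ (T z) z : ℂ)‖ / (‖T z‖ * ‖z‖)} = Real.sqrt (2 * Real.sqrt 2 - 2) := by
  have hTz (z : EuclideanSpace ℂ (Fin 2)) (i : Fin 2) : T z i = ![1, 1 + I] i * z i := by
    fin_cases i <;> simp [hT]
  set w : EuclideanSpace ℂ (Fin 2) := !₂[((√(√2) : ℝ) : ℂ), 1]
  have hw : w ≠ 0 := fun h => one_ne_zero (congrArg (fun v : EuclideanSpace ℂ (Fin 2) => v 1) h)
  have hw0 : ‖w 0‖ ^ 2 = √2 := by simp [w]
  have hw1 : ‖w 1‖ ^ 2 = 1 := by simp [w]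
  refine IsLeast.csInf_eq ⟨⟨w, hw, ?_⟩, ?_⟩
  · rw [norm_inner_div_eq_sqrt_cosSq (hTz w), hw0, hw1, cosSq_sqrt_two_one]
  · rintro _ ⟨z, hz, rfl⟩
    rw [norm_inner_div_eq_sqrt_cosSq (hTz z)]
    refine Real.sqrt_le_sqrt (two_mul_sqrt_two_sub_two_le_cosSq (by positivity) (by positivity) ?_)
    rw [← EuclideanSpace.norm_sq_fin_two]
    exact pow_pos (norm_pos_iff.mpr hz) 2
end
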